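/- For n > 0, the weighted partition function Z₁(n) = ∫_{ℝ²} |w1|·exp(-n·w1^2·w2^4)·(1/(2π))·exp(-(w1^2+w2^2)/2) dw1 dw2 satisfies n^{1/4}·Z₁(n) → (2^{-5/4}/π)·Γ(3/4)·Γ(1/4) as n → ∞. -/

import Mathlib

open Real MeasureTheory Filter

/-- Weighted partition function with weight `|w1|` for `f(w1,w2) = w1^2 w2^4`. -/
noncomputable def Z1b (n : ℝ) : ℝ :=
  ∫ w1 : ℝ, ∫ w2 : ℝ,
    |w1| * Real.exp (-(n * (w1 ^ 2 * w2 ^ 4))) *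
      (1 / (2 * π) * Real.exp (-(w1 ^ 2 + w2 ^ 2) / 2))

/-!
Integrating out `w1` first (a first absolute Gaussian moment) gives
`Z₁(n) = (2π)⁻¹ ∫ e^{-w²/2} (n w⁴ + 1/2)⁻¹ dw`. The substitution `w = n^{-1/4} u` turns
`n^{1/4} Z₁(n)` into `(2π)⁻¹ ∫ e^{-u²/(2√n)} (u⁴ + 1/2)⁻¹ du`, which tends to
`(2π)⁻¹ ∫ (u⁴ + 1/2)⁻¹ du` by dominated convergence. Finally, writing `s⁻¹ = ∫₀^∞ e^{-st} dt`
and exchanging the integrals evaluates `∫ (u⁴ + a)⁻¹ du = a^{-3/4} Γ(1/4) Γ(3/4) / 2`.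
-/

open Set Topology

lemma integral_abs_mul_exp_neg_mul_sq {b : ℝ} (hb : 0 < b) :
    ∫ x : ℝ, |x| * exp (-b * x ^ 2) = b⁻¹ := by
  have h := integral_rpow_mul_exp_neg_mul_rpow (p := 2) (q := 1) two_pos (by norm_num) hb
  norm_num only [rpow_one, rpow_two, Gamma_one, rpow_neg_one] at h
  have h_abs := integral_comp_abs (f := fun x => x * exp (-b * x ^ 2))
  simp only [sq_abs] at h_abs
  rw [h_abs, h]
  ring

lemma integral_exp_neg_mul_pow_four {b : ℝ} (hb : 0 < b) :
    ∫ x : ℝ, exp (-b * x ^ 4) = b ^ (-(1 / 4) : ℝ) * Gamma (1 / 4) / 2 := by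
  have h := integral_exp_neg_mul_rpow (p := 4) (by norm_num) hb
  have h4 (x : ℝ) : x ^ (4 : ℝ) = x ^ 4 := by exact_mod_cast rpow_natCast x 4
  simp only [h4, Gamma_add_one (by norm_num : (1 / 4 : ℝ) ≠ 0)] at h
  have h_abs := integral_comp_abs (f := fun x => exp (-b * x ^ 4))
  simp only [Even.pow_abs ⟨2, rfl⟩] at h_abs
  rw [h_abs, h]
  ring_nf

lemma inv_eq_integral_exp_neg_mul_Ioi {s : ℝ} (hs : 0 < s) :
    s⁻¹ = ∫ t in Ioi (0 : ℝ), exp (-s * t) := by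
  rw [integral_exp_mul_Ioi (neg_lt_zero.2 hs)]
  simp

lemma integrable_inv_pow_four_add {a : ℝ} (ha : 0 < a) :
    Integrable fun u : ℝ => (u ^ 4 + a)⁻¹ := by
  refine (integrable_inv_one_add_sq.const_mul (1 + a⁻¹)).mono'
    (by fun_prop (disch := intro u; positivity)) (ae_of_all _ fun u => ?_)
  have h : (u ^ 4 + a) * (1 + a⁻¹) = 1 + u ^ 2 + (u ^ 2 + u ^ 4 + (u ^ 2 - a) ^ 2 / a) := by
    field_simp
    ring
  rw [Real.norm_of_nonneg (by positivity), ← div_eq_mul_inv, inv_le_comm₀ (by positivity)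
    (by positivity), inv_div, div_le_iff₀ (by positivity), h]
  exact le_add_of_nonneg_right (by positivity)

lemma integrable_exp_neg_mul_pow_four_add_prod {a : ℝ} (ha : 0 < a) :
    Integrable (Function.uncurry fun u t : ℝ => exp (-(u ^ 4 + a) * t))
      (volume.prod (volume.restrict (Ioi 0))) := by
  refine (integrable_prod_iff (by fun_prop)).2 ⟨ae_of_all _ fun u => ?_, ?_⟩
  · exact exp_neg_integrableOn_Ioi (b := u ^ 4 + a) 0 (by positivity)
  · refine (integrable_inv_pow_four_add ha).congr (ae_of_all _ fun u => ?_)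
    simp only [Function.uncurry_apply_pair, Real.norm_of_nonneg (exp_nonneg _)]
    exact inv_eq_integral_exp_neg_mul_Ioi (by positivity)

lemma integral_inv_pow_four_add {a : ℝ} (ha : 0 < a) :
    ∫ u : ℝ, (u ^ 4 + a)⁻¹ = a ^ (-(3 / 4) : ℝ) * Gamma (1 / 4) * Gamma (3 / 4) / 2 := by
  have inner (t : ℝ) (ht : t ∈ Ioi 0) : ∫ u : ℝ, exp (-(u ^ 4 + a) * t) =
      Gamma (1 / 4) / 2 * (t ^ (-(1 / 4) : ℝ) * exp (-a * t ^ (1 : ℝ))) := by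
    have split (u : ℝ) : exp (-(u ^ 4 + a) * t) = exp (-t * u ^ 4) * exp (-a * t) := by
      rw [← exp_add]
      ring_nf
    simp_rw [split, integral_mul_const, integral_exp_neg_mul_pow_four ht, rpow_one]
    ring
  calc ∫ u : ℝ, (u ^ 4 + a)⁻¹
      = ∫ u : ℝ, ∫ t in Ioi 0, exp (-(u ^ 4 + a) * t) :=
        integral_congr_ae (ae_of_all _ fun u => inv_eq_integral_exp_neg_mul_Ioi (by positivity))
    _ = ∫ t in Ioi 0, ∫ u : ℝ, exp (-(u ^ 4 + a) * t) :=
        integral_integral_swap (integrable_exp_neg_mul_pow_four_add_prod ha)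
    _ = _ := by
      rw [setIntegral_congr_fun measurableSet_Ioi inner, integral_const_mul,
        integral_rpow_mul_exp_neg_mul_rpow one_pos (by norm_num) ha]
      norm_num
      ring

lemma tendsto_integral_exp_neg_mul_sq_mul {g : ℝ → ℝ} (hg : Integrable g) :
    Tendsto (fun ε : ℝ => ∫ u, exp (-ε * u ^ 2) * g u) (𝓝[≥] 0) (𝓝 (∫ u, g u)) := by
  refine tendsto_integral_filter_of_dominated_convergence (fun u => ‖g u‖)
    (Eventually.of_forall fun ε => ?_) ?_ hg.norm (ae_of_all _ fun u => ?_)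
  · exact (continuous_exp.comp (by fun_prop)).aestronglyMeasurable.mul hg.aestronglyMeasurable
  · filter_upwards [self_mem_nhdsWithin] with ε (hε : 0 ≤ ε)
    refine ae_of_all _ fun u => ?_
    rw [norm_mul, Real.norm_of_nonneg (exp_nonneg _)]
    exact mul_le_of_le_one_left (norm_nonneg _) (exp_le_one_iff.2 (by nlinarith [sq_nonneg u]))
  · have h : Continuous fun ε : ℝ => exp (-ε * u ^ 2) * g u := by fun_prop
    simpa using (h.tendsto 0).mono_left nhdsWithin_le_nhds

lemma mul_integral_exp_neg_sq_div_two_mul_inv_pow_four_add {c a : ℝ} (hc : 0 < c) :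
    c * ∫ w : ℝ, exp (-w ^ 2 / 2) * (c ^ 4 * w ^ 4 + a)⁻¹ =
      ∫ u : ℝ, exp (-(2 * c ^ 2)⁻¹ * u ^ 2) * (u ^ 4 + a)⁻¹ := by
  have h := Measure.integral_comp_inv_mul_left
    (fun w : ℝ => exp (-w ^ 2 / 2) * (c ^ 4 * w ^ 4 + a)⁻¹) c
  rw [abs_of_pos hc, smul_eq_mul] at h
  rw [← h]
  refine integral_congr_ae (ae_of_all _ fun u => ?_)
  field_simp

lemma integrable_Z1b_integrand {n : ℝ} (hn : 0 ≤ n) :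
    Integrable (Function.uncurry fun w1 w2 : ℝ =>
      |w1| * exp (-(n * (w1 ^ 2 * w2 ^ 4))) * (1 / (2 * π) * exp (-(w1 ^ 2 + w2 ^ 2) / 2)))
      (volume.prod volume) := by
  have h1 : Integrable fun x : ℝ => |x| * exp (-(1 / 2) * x ^ 2) := by
    simpa [abs_mul] using (integrable_mul_exp_neg_mul_sq (b := 1 / 2) (by norm_num)).abs
  have h2 := (integrable_exp_neg_mul_sq (b := 1 / 2) (by norm_num)).const_mul (2 * π)⁻¹
  refine (h1.mul_prod h2).mono' (by fun_prop) (ae_of_all _ fun ⟨w1, w2⟩ => ?_)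
  have split : |w1| * exp (-(n * (w1 ^ 2 * w2 ^ 4))) *
      (1 / (2 * π) * exp (-(w1 ^ 2 + w2 ^ 2) / 2)) = exp (-(n * (w1 ^ 2 * w2 ^ 4))) *
      (|w1| * exp (-(1 / 2) * w1 ^ 2) * ((2 * π)⁻¹ * exp (-(1 / 2) * w2 ^ 2))) := by
    rw [show -(w1 ^ 2 + w2 ^ 2) / 2 = -(1 / 2) * w1 ^ 2 + -(1 / 2) * w2 ^ 2 by ring, exp_add]
    ring
  rw [Function.uncurry_apply_pair, split, Real.norm_of_nonneg (by positivity)]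
  exact mul_le_of_le_one_left (by positivity) (exp_le_one_iff.2 (neg_nonpos.2 (by positivity)))

lemma integral_Z1b_integrand_fst {n : ℝ} (hn : 0 ≤ n) (w2 : ℝ) :
    ∫ w1 : ℝ, |w1| * exp (-(n * (w1 ^ 2 * w2 ^ 4))) *
        (1 / (2 * π) * exp (-(w1 ^ 2 + w2 ^ 2) / 2)) =
      (2 * π)⁻¹ * (exp (-w2 ^ 2 / 2) * (n * w2 ^ 4 + 1 / 2)⁻¹) := by
  have split (w1 : ℝ) : |w1| * exp (-(n * (w1 ^ 2 * w2 ^ 4))) *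
      (1 / (2 * π) * exp (-(w1 ^ 2 + w2 ^ 2) / 2)) =
      (2 * π)⁻¹ * exp (-w2 ^ 2 / 2) * (|w1| * exp (-(n * w2 ^ 4 + 1 / 2) * w1 ^ 2)) := by
    rw [show -(w1 ^ 2 + w2 ^ 2) / 2 = -w2 ^ 2 / 2 + -(1 / 2) * w1 ^ 2 by ring,
      show -(n * w2 ^ 4 + 1 / 2) * w1 ^ 2 = -(n * (w1 ^ 2 * w2 ^ 4)) + -(1 / 2) * w1 ^ 2 by ring,
      exp_add, exp_add]
    ring
  simp_rw [split, integral_const_mul,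
    integral_abs_mul_exp_neg_mul_sq (show 0 < n * w2 ^ 4 + 1 / 2 by positivity)]
  ring

lemma Z1b_eq_integral {n : ℝ} (hn : 0 ≤ n) :
    Z1b n = (2 * π)⁻¹ * ∫ w : ℝ, exp (-w ^ 2 / 2) * (n * w ^ 4 + 1 / 2)⁻¹ := by
  rw [Z1b, integral_integral_swap (integrable_Z1b_integrand hn), ← integral_const_mul]
  exact integral_congr_ae (ae_of_all _ (integral_Z1b_integrand_fst hn))

/-- `n^(1/4)·Z₁(n) → (2^(-5/4)/π)·Γ(3/4)·Γ(1/4)` as `n → ∞`. -/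
theorem Z1b_asymptotic :
    Tendsto (fun n : ℝ => n ^ (1/4 : ℝ) * Z1b n) atTop
      (nhds ((2 : ℝ) ^ (-(5/4) : ℝ) / π * Real.Gamma (3/4) * Real.Gamma (1/4))) := by
  have hε : Tendsto (fun c : ℝ => (2 * c ^ 2)⁻¹) atTop (𝓝[≥] 0) :=
    (tendsto_inv_atTop_nhdsGT_zero.comp ((tendsto_pow_atTop two_ne_zero).const_mul_atTop
      two_pos)).mono_right (nhdsWithin_mono _ Ioi_subset_Ici_self)
  have hlim := ((tendsto_integral_exp_neg_mul_sq_mul (integrable_inv_pow_four_add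
    (by norm_num : (0 : ℝ) < 1 / 2))).comp hε).const_mul (2 * π)⁻¹
  have hval : (2 * π)⁻¹ * ∫ u : ℝ, (u ^ 4 + 1 / 2)⁻¹ =
      (2 : ℝ) ^ (-(5/4) : ℝ) / π * Real.Gamma (3/4) * Real.Gamma (1/4) := by
    have h2 : (1 / 2 : ℝ) ^ (-(3 / 4) : ℝ) = 2 ^ (-(5/4) : ℝ) * 2 ^ (2 : ℝ) := by
      rw [← rpow_add two_pos, one_div, inv_rpow zero_le_two, ← rpow_neg zero_le_two]
      norm_num
    rw [integral_inv_pow_four_add (by norm_num), h2, rpow_two]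
    field_simp
  rw [← hval]
  refine (hlim.comp (tendsto_rpow_atTop (by norm_num : (0 : ℝ) < 1 / 4))).congr' ?_
  filter_upwards [eventually_gt_atTop 0] with n hn
  have hc : (n ^ (1 / 4 : ℝ)) ^ 4 = n := by
    rw [← rpow_natCast, ← rpow_mul hn.le]
    norm_num
  have scaled := mul_integral_exp_neg_sq_div_two_mul_inv_pow_four_add (a := 1 / 2)
    (rpow_pos_of_pos hn (1 / 4))
  rw [hc] at scaled
  rw [Function.comp_apply, Function.comp_apply, Z1b_eq_integral hn.le, mul_left_comm, scaled]
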